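/- arXiv:math/0506170 — 2 statements merged into one kernel-verified Lean document; each statement's English description precedes it below -/
import Mathlib

section
/- For every field k of characteristic zero and every m ≥ 1, δ_{m+1} ∘ δ_m = 0; hence the spaces k[Σ_m], m ≥ 1, with the maps δ_m form a cochain complex. -/
/-!
A permutation `σ ∈ Σ_m` is encoded as the permutation of `ℕ` that acts on the strands
`1, …, m` and fixes every other number. The fixed points `0` and `m + 1` then serve as
boundary strands: `d_0` and `d_{m+1}` double them, and every `d_i` is given by one formula
`double`. For injective maps this formula satisfies the cosimplicial identity
`d_a ∘ d_b = d_{b+1} ∘ d_a` for `a ≤ b`, so in the double sum expressing `δ_{m+1} (δ_m σ)`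
the term indexed by `(i, j)` with `j ≤ i` cancels the term indexed by `(j, i + 1)`.
-/

namespace MarklOps

/-- The juxtaposition `σ × id₁ ∈ Σ_{m+1}` of `σ ∈ Σ_m` with the identity on one strand. -/
def extLast {m : ℕ} (σ : Equiv.Perm (Fin m)) : Equiv.Perm (Fin (m + 1)) :=
  (finSuccEquivLast.symm).permCongr σ.optionCongr

/-- The cycle `ρ_v ∈ Σ_{m+1}` (0-based) fixing `k < v`, sending `k ↦ k+1` for `v ≤ k < m`
and `m ↦ v`. -/
def rho {m : ℕ} (v : Fin (m + 1)) : Equiv.Perm (Fin (m + 1)) :=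
  Fin.revPerm * (Fin.cycleRange v.rev)⁻¹ * Fin.revPerm

/-- The doubling map `d_i(σ) ∈ Σ_{m+1}` of `σ ∈ Σ_m`, for the (1-based) paper index
`0 ≤ i ≤ m+1`: for `1 ≤ i ≤ m` it doubles the `i`-th input strand of `σ`
(it sends `i ↦ σ(i)`, `i+1 ↦ σ(i)+1`, and for `j < i` resp. `j > i+1` it sends `j` to
`σ(j)` resp. `σ(j−1)` if this value is less than `σ(i)`, and to `σ(j)+1` resp. `σ(j−1)+1`
otherwise); moreover `d_0(σ) = id_1 × σ` and `d_{m+1}(σ) = σ × id_1`. -/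
def dbl {m : ℕ} (σ : Equiv.Perm (Fin m)) (i : ℕ) : Equiv.Perm (Fin (m + 1)) :=
  if h : 1 ≤ i ∧ i ≤ m then
    rho (Fin.succ (σ ⟨i - 1, by omega⟩)) * extLast σ * (rho ⟨i, by omega⟩)⁻¹
  else if i = 0 then
    rho ⟨0, Nat.succ_pos m⟩ * extLast σ * (rho ⟨0, Nat.succ_pos m⟩)⁻¹
  else
    extLast σ

/-- The differential `δ_m : k[Σ_m] → k[Σ_{m+1}]`, `δ_m(σ) = Σ_{i=0}^{m+1} (−1)^i d_i(σ)`. -/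
noncomputable def delta (k : Type*) [Field k] (m : ℕ) :
    MonoidAlgebra k (Equiv.Perm (Fin m)) →ₗ[k] MonoidAlgebra k (Equiv.Perm (Fin (m + 1))) :=
  Finsupp.lift (MonoidAlgebra k (Equiv.Perm (Fin (m + 1)))) k (Equiv.Perm (Fin m))
    (fun σ => ∑ i ∈ Finset.range (m + 2),
      ((-1 : k) ^ i) • MonoidAlgebra.of k (Equiv.Perm (Fin (m + 1))) (dbl σ i)) ∘ₗ
    (MonoidAlgebra.coeffLinearEquiv k).toLinearMap

open Equiv

theorem val_rho_inv_apply {m : ℕ} (v x : Fin (m + 1)) :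
    ((rho v)⁻¹ x : ℕ) = if x < v then (x : ℕ) else if x = v then m else x - 1 := by
  have hrev : (Fin.revPerm : Perm (Fin (m + 1)))⁻¹ = Fin.revPerm := Fin.revPerm_symm
  simp only [rho, mul_inv_rev, inv_inv, hrev, Perm.mul_apply, Fin.revPerm_apply, Fin.val_rev]
  rcases le_or_gt x.rev v.rev with h | h
  · rw [Fin.coe_cycleRange_of_le h]
    simp only [Fin.le_def, Fin.ext_iff, Fin.lt_def, Fin.val_rev] at h ⊢
    split_ifs <;> omega
  · rw [Fin.cycleRange_of_gt h]
    simp only [Fin.lt_def, Fin.ext_iff, Fin.val_rev] at h ⊢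
    split_ifs <;> omega

theorem extLast_castSucc {m : ℕ} (σ : Perm (Fin m)) (x : Fin m) :
    extLast σ x.castSucc = (σ x).castSucc := by
  simp [extLast]

theorem extLast_last {m : ℕ} (σ : Perm (Fin m)) : extLast σ (Fin.last m) = Fin.last m := by
  simp [extLast]

def strandEquiv (m : ℕ) : Fin m ≃ {n : ℕ // 1 ≤ n ∧ n ≤ m} where
  toFun x := ⟨x + 1, by omega⟩
  invFun n := ⟨n - 1, by omega⟩
  left_inv x := by ext; simp
  right_inv n := by ext; simp; omega

def natPerm {m : ℕ} (σ : Perm (Fin m)) : Perm ℕ := σ.extendDomain (strandEquiv m)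

section natPerm

variable {m : ℕ} (σ : Perm (Fin m))

theorem natPerm_apply_of_mem {n : ℕ} (h : 1 ≤ n ∧ n ≤ m) :
    natPerm σ n = σ ⟨n - 1, by omega⟩ + 1 :=
  Perm.extendDomain_apply_subtype σ (strandEquiv m) h

theorem natPerm_apply_of_not_mem {n : ℕ} (h : ¬(1 ≤ n ∧ n ≤ m)) : natPerm σ n = n :=
  Perm.extendDomain_apply_not_subtype σ (strandEquiv m) h

theorem natPerm_apply_le {n : ℕ} (h : n ≤ m) : natPerm σ n ≤ m := by
  by_cases hn : 1 ≤ n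
  · rw [natPerm_apply_of_mem σ ⟨hn, h⟩]; omega
  · rw [natPerm_apply_of_not_mem σ (by omega)]; omega

theorem natPerm_apply_of_lt {n : ℕ} (h : m < n) : natPerm σ n = n :=
  natPerm_apply_of_not_mem σ (by omega)

theorem natPerm_apply_zero : natPerm σ 0 = 0 := natPerm_apply_of_not_mem σ (by omega)

theorem natPerm_mul (τ : Perm (Fin m)) : natPerm (σ * τ) = natPerm σ * natPerm τ :=
  (Perm.extendDomain_mul _ σ τ).symm

theorem natPerm_injective : Function.Injective (natPerm (m := m)) :=
  Perm.extendDomainHom_injective (strandEquiv m)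

theorem natPerm_extLast : natPerm (extLast σ) = natPerm σ := by
  ext n
  by_cases hn : 1 ≤ n ∧ n ≤ m
  · rw [natPerm_apply_of_mem _ (by omega), natPerm_apply_of_mem σ hn]
    have := extLast_castSucc σ ⟨n - 1, by omega⟩
    simp only [Fin.castSucc_mk] at this
    rw [this, Fin.val_castSucc]
  · by_cases hm : n = m + 1
    · subst hm
      rw [natPerm_apply_of_mem _ (by omega), natPerm_apply_of_lt σ (by omega)]
      have := extLast_last σ
      simp only [Fin.last] at this
      simp only [Nat.add_sub_cancel, this]
    · rw [natPerm_apply_of_not_mem _ (by omega), natPerm_apply_of_not_mem σ hn]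

theorem natPerm_apply_cases (n : ℕ) :
    n ≤ m ∧ natPerm σ n ≤ m ∨ m < n ∧ natPerm σ n = n := by
  rcases le_or_gt n m with h | h
  · exact Or.inl ⟨h, natPerm_apply_le σ h⟩
  · exact Or.inr ⟨h, natPerm_apply_of_lt σ h⟩

end natPerm

theorem natPerm_rho_inv_apply {m : ℕ} (v : Fin (m + 1)) (n : ℕ) :
    natPerm (rho v)⁻¹ n =
      if n ≤ v then n else if n = v + 1 then m + 1 else if n ≤ m + 1 then n - 1 else n := by
  by_cases hn : 1 ≤ n ∧ n ≤ m + 1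
  · rw [natPerm_apply_of_mem _ hn, val_rho_inv_apply]
    simp only [Fin.lt_def, Fin.ext_iff]
    split_ifs <;> omega
  · rw [natPerm_apply_of_not_mem _ hn]
    split_ifs <;> omega

/-- The formula for `d_i`, written for any `f : ℕ → ℕ`; for injective `f` it matches the four
cases of the definition of `d_i`. -/
def double (f : ℕ → ℕ) (i : ℕ) (j : ℕ) : ℕ :=
  if j = i + 1 then f i + 1
  else
    let v := f (if j ≤ i then j else j - 1)
    if v ≤ f i then v else v + 1

theorem dbl_of_le {m : ℕ} (σ : Perm (Fin m)) {i : ℕ} (hi : i ≤ m) {v w : Fin (m + 1)}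
    (hv : (v : ℕ) = natPerm σ i) (hw : (w : ℕ) = i) :
    dbl σ i = rho v * extLast σ * (rho w)⁻¹ := by
  have hw' : w = ⟨i, by omega⟩ := Fin.ext hw
  rw [dbl, hw']
  split_ifs with h h0
  · rw [show v = (σ ⟨i - 1, by omega⟩).succ from
      Fin.ext (by rw [hv, natPerm_apply_of_mem σ h, Fin.val_succ])]
  · subst h0
    rw [show v = 0 from Fin.ext (by rw [hv, natPerm_apply_zero, Fin.val_zero])]
    rfl
  · omega

theorem dbl_of_lt {m : ℕ} (σ : Perm (Fin m)) {i : ℕ} (hi : m < i) : dbl σ i = extLast σ := by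
  rw [dbl, dif_neg (by omega), if_neg (by omega)]

theorem natPerm_dbl {m : ℕ} (σ : Perm (Fin m)) (i : ℕ) :
    ⇑(natPerm (dbl σ i)) = double (natPerm σ) i := by
  funext j
  have hinj (x y : ℕ) : natPerm σ x = natPerm σ y ↔ x = y := (natPerm σ).injective.eq_iff
  have hi := natPerm_apply_cases σ i
  have hj := natPerm_apply_cases σ j
  have hj' := natPerm_apply_cases σ (j - 1)
  have := hinj j i; have := hinj (j - 1) i
  rcases le_or_gt i m with him | him
  · obtain ⟨v, hv⟩ : ∃ v : Fin (m + 1), (v : ℕ) = natPerm σ i := ⟨⟨natPerm σ i, by omega⟩, rfl⟩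
    obtain ⟨w, hw⟩ : ∃ w : Fin (m + 1), (w : ℕ) = i := ⟨⟨i, by omega⟩, rfl⟩
    -- `ρ_v⁻¹` and `ρ_w⁻¹` act explicitly on `ℕ`, so compare after composing with `ρ_v⁻¹`.
    have key : natPerm (rho v)⁻¹ * natPerm (dbl σ i) = natPerm σ * natPerm (rho w)⁻¹ := by
      rw [dbl_of_le σ him hv hw, ← natPerm_mul, ← natPerm_extLast σ, ← natPerm_mul]
      group
    apply (natPerm (rho v)⁻¹).injective
    rw [← Perm.mul_apply, key, Perm.mul_apply, natPerm_rho_inv_apply, natPerm_rho_inv_apply,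
      hv, hw]
    have := natPerm_apply_of_lt σ (show m < m + 1 by omega)
    simp only [double]
    split_ifs <;> omega
  · rw [dbl_of_lt σ him, natPerm_extLast]
    simp only [double]
    split_ifs <;> omega

theorem double_double {f : ℕ → ℕ} (hf : Function.Injective f) {a b : ℕ} (hab : a ≤ b) :
    double (double f b) a = double (double f a) (b + 1) := by
  funext j
  have hf' (x y : ℕ) : f x = f y ↔ x = y := hf.eq_iff
  have := hf' a b
  obtain hj | rfl | hj | rfl | hj :
      j ≤ a ∨ j = a + 1 ∨ (a + 1 < j ∧ j ≤ b + 1) ∨ j = b + 2 ∨ b + 2 < j := by omega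
  all_goals simp (disch := omega) only [double, if_pos, if_neg, Nat.add_sub_cancel, le_refl]
  · have := hf' j a; have := hf' j b
    split_ifs <;> omega
  · split_ifs <;> omega
  · have := hf' (j - 1) a; have := hf' (j - 1) b
    split_ifs <;> omega
  · split_ifs <;> omega
  · have := hf' (j - 1 - 1) a; have := hf' (j - 1 - 1) b
    split_ifs <;> omega

theorem dbl_dbl {m : ℕ} (σ : Perm (Fin m)) {a b : ℕ} (hab : a ≤ b) :
    dbl (dbl σ b) a = dbl (dbl σ a) (b + 1) := by
  apply natPerm_injective
  apply DFunLike.coe_injective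
  rw [natPerm_dbl, natPerm_dbl, natPerm_dbl, natPerm_dbl]
  exact double_double (natPerm σ).injective hab

open Finset in
theorem sum_range_sum_range_alternating_eq_zero {R M : Type*} [Ring R] [AddCommGroup M] [Module R M]
    (n : ℕ) (x : ℕ → ℕ → M) (hx : ∀ a b, a ≤ b → b ≤ n → x b a = x a (b + 1)) :
    ∑ i ∈ range (n + 1), ∑ j ∈ range (n + 2), (-1 : R) ^ (i + j) • x i j = 0 := by
  rw [← sum_product', ← sum_filter_add_sum_filter_not _ (fun p : ℕ × ℕ => p.2 ≤ p.1),
    add_eq_zero_iff_eq_neg, ← sum_neg_distrib]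
  refine sum_nbij' (fun p => (p.2, p.1 + 1)) (fun p => (p.2 - 1, p.1)) ?_ ?_ ?_ ?_ ?_
  · intro p hp
    simp only [mem_filter, mem_product, mem_range] at hp ⊢
    omega
  · intro p hp
    simp only [mem_filter, mem_product, mem_range] at hp ⊢
    omega
  · intro p _
    simp
  · rintro ⟨i, j⟩ h
    simp only [mem_filter, mem_product, mem_range] at h
    simp only [Prod.mk.injEq, true_and]
    omega
  · rintro ⟨i, j⟩ h
    simp only [mem_filter, mem_product, mem_range] at h
    rw [hx j i h.2 (by omega), show j + (i + 1) = i + j + 1 by ring, pow_succ, mul_neg_one,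
      neg_smul, neg_neg]

theorem delta_of (k : Type*) [Field k] (m : ℕ) (σ : Perm (Fin m)) :
    delta k m (MonoidAlgebra.of k _ σ) =
      ∑ i ∈ Finset.range (m + 2), (-1 : k) ^ i • MonoidAlgebra.of k _ (dbl σ i) := by
  simp [delta, MonoidAlgebra.of_apply]

theorem delta_comp_delta_eq_zero_general (k : Type*) [Field k] (m : ℕ) :
    (delta k (m + 1)).comp (delta k m) = 0 := by
  refine MonoidAlgebra.lhom_ext' fun σ => LinearMap.ext_ring ?_
  change delta k (m + 1) (delta k m (MonoidAlgebra.of k _ σ)) = 0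
  simp only [delta_of, map_sum, map_smul, Finset.smul_sum, smul_smul, ← pow_add]
  exact sum_range_sum_range_alternating_eq_zero (m + 1) _ fun a b hab _ => by rw [dbl_dbl σ hab]

/-- For every field `k` of characteristic zero and every `m ≥ 1`, `δ_{m+1} ∘ δ_m = 0`;
hence the spaces `k[Σ_m]`, `m ≥ 1`, with the maps `δ_m` form a cochain complex. -/
theorem delta_comp_delta_eq_zero (k : Type*) [Field k] [CharZero k] (m : ℕ) (hm : 1 ≤ m) :
    (delta k (m + 1)).comp (delta k m) = 0 :=
  delta_comp_delta_eq_zero_general k m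

end MarklOps
end

section
/- For every m ≥ 1 and every σ ∈ Σ_m, the skeleton κ(σ) is a primitive permutation, i.e. g(κ(σ)) = 0; moreover, if σ itself is primitive then κ(σ) = σ. -/
namespace MarklOps

/-- `a(σ)`: the largest `a` such that `σ` fixes the first `a` points (0-based: all `j < a`). -/
def aOf {m : ℕ} (σ : Equiv.Perm (Fin m)) : ℕ :=
  Nat.findGreatest (fun a => ∀ j : Fin m, (j : ℕ) < a → σ j = j) m

/-- `c(σ)`: the largest `c` such that `σ` fixes the last `c` points. -/
def cOf {m : ℕ} (σ : Equiv.Perm (Fin m)) : ℕ :=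
  Nat.findGreatest (fun c => ∀ j : Fin m, m - c ≤ (j : ℕ) → σ j = j) m

/-- Length `m − a(σ) − c(σ)` of the middle block of `σ`. -/
def midLen {m : ℕ} (σ : Equiv.Perm (Fin m)) : ℕ := m - aOf σ - cOf σ

lemma fix_low {m : ℕ} (σ : Equiv.Perm (Fin m)) (j : Fin m) (hj : (j : ℕ) < aOf σ) :
    σ j = j := by
  have h := Nat.findGreatest_spec (P := fun a => ∀ j : Fin m, (j : ℕ) < a → σ j = j)
    (Nat.zero_le m) (fun j hj => absurd hj (by omega))
  exact h j hj

lemma fix_high {m : ℕ} (σ : Equiv.Perm (Fin m)) (j : Fin m) (hj : m - cOf σ ≤ (j : ℕ)) :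
    σ j = j := by
  have h := Nat.findGreatest_spec (P := fun c => ∀ j : Fin m, m - c ≤ (j : ℕ) → σ j = j)
    (Nat.zero_le m) (fun j hj => absurd hj (by have := j.isLt; omega))
  exact h j hj

lemma mid_mem {m : ℕ} (σ : Equiv.Perm (Fin m)) (x : Fin m)
    (hx : aOf σ ≤ (x : ℕ) ∧ (x : ℕ) < m - cOf σ) :
    aOf σ ≤ (σ x : ℕ) ∧ (σ x : ℕ) < m - cOf σ := by
  by_contra hcon
  have h1 : (σ x : ℕ) < aOf σ ∨ m - cOf σ ≤ (σ x : ℕ) := by omega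
  have h2 : σ (σ x) = σ x := h1.elim (fix_low σ _) (fix_high σ _)
  have h3 : σ x = x := σ.injective h2
  rw [h3] at h1
  omega

/-- The middle part `ω(σ)` of `σ` as a function, `s ↦ σ(a(σ)+s) − a(σ)`. -/
def midFun {m : ℕ} (σ : Equiv.Perm (Fin m)) (s : Fin (midLen σ)) : Fin (midLen σ) :=
  ⟨(σ ⟨aOf σ + (s : ℕ), by have := s.isLt; unfold midLen at this; omega⟩ : ℕ) - aOf σ, by
    have hs := s.isLt
    unfold midLen at hs ⊢
    have hm := mid_mem σ ⟨aOf σ + (s : ℕ), by omega⟩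
      ⟨by simp, by simp; omega⟩
    omega⟩

lemma midFun_injective {m : ℕ} (σ : Equiv.Perm (Fin m)) : Function.Injective (midFun σ) := by
  intro s t h
  have hs := s.isLt
  have ht := t.isLt
  unfold midLen at hs ht
  have hv : ((σ ⟨aOf σ + (s : ℕ), by omega⟩ : Fin m) : ℕ) - aOf σ
      = ((σ ⟨aOf σ + (t : ℕ), by omega⟩ : Fin m) : ℕ) - aOf σ := congrArg Fin.val h
  have hms := mid_mem σ ⟨aOf σ + (s : ℕ), by omega⟩ ⟨by simp, by simp; omega⟩
  have hmt := mid_mem σ ⟨aOf σ + (t : ℕ), by omega⟩ ⟨by simp, by simp; omega⟩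
  have hv2 : (σ ⟨aOf σ + (s : ℕ), by omega⟩ : Fin m) = σ ⟨aOf σ + (t : ℕ), by omega⟩ :=
    Fin.ext (by omega)
  have := congrArg Fin.val (σ.injective hv2)
  simp at this
  exact Fin.ext (by omega)

/-- The middle part `ω(σ) ∈ Σ_{m−a(σ)−c(σ)}` of `σ`, with `ω(σ)(s) = σ(a(σ)+s) − a(σ)`. -/
noncomputable def midPerm {m : ℕ} (σ : Equiv.Perm (Fin m)) : Equiv.Perm (Fin (midLen σ)) :=
  Equiv.ofBijective (midFun σ) (Finite.injective_iff_bijective.mp (midFun_injective σ))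

/-- `b(σ)`: the number of doubled strings in `ω(σ)`, i.e. of indices `s` with
`ω(σ)(s+1) = ω(σ)(s)+1`. -/
noncomputable def bOf {m : ℕ} (σ : Equiv.Perm (Fin m)) : ℕ :=
  (Finset.univ.filter fun s : Fin (midLen σ) =>
    ∃ h : (s : ℕ) + 1 < midLen σ,
      (midPerm σ ⟨(s : ℕ) + 1, h⟩ : ℕ) = (midPerm σ s : ℕ) + 1).card

/-- The grade `g(σ)` of a permutation `σ ∈ Σ_m`: `g(id_m) = m−1` and
`g(σ) = a(σ) + b(σ) + c(σ)` otherwise.  A permutation is primitive iff its grade is `0`. -/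
noncomputable def grade {m : ℕ} (σ : Equiv.Perm (Fin m)) : ℕ :=
  if σ = 1 then m - 1 else aOf σ + bOf σ + cOf σ

/-- The set of least elements (class starts) of the equivalence classes of the relation
generated by `s ∼ s+1` whenever `ω(σ)(s+1) = ω(σ)(s)+1` on the middle block of `σ`. -/
noncomputable def startSet {m : ℕ} (σ : Equiv.Perm (Fin m)) : Finset (Fin (midLen σ)) :=
  Finset.univ.filter fun s : Fin (midLen σ) =>
    (s : ℕ) = 0 ∨ ∀ _h : 0 < (s : ℕ),
      (midPerm σ s : ℕ) ≠ (midPerm σ ⟨(s : ℕ) - 1, by have := s.isLt; omega⟩ : ℕ) + 1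

/-- The skeleton `κ(σ) ∈ Σ_{m−g(σ)}`, bundled with its arity: `skel σ = ⟨m − g(σ), κ(σ)⟩`.
It sends `t` to the rank, among the images of all classes ordered by their least elements,
of the image under `ω(σ)` of the `t`-th class (classes ordered by their least elements);
since each class is an interval mapped by `ω(σ)` onto an interval, this is the rank of
`ω(σ)(s_t)` among the values of `ω(σ)` at all class starts, where `s_t` is the `t`-th class
start.  By convention `κ(id_m) = id_1`. -/
noncomputable def skel {m : ℕ} (σ : Equiv.Perm (Fin m)) : Σ n : ℕ, Equiv.Perm (Fin n) :=
  if σ = 1 then ⟨1, 1⟩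
  else
    ⟨(startSet σ).card,
      ((startSet σ).orderIsoOfFin rfl).toEquiv.trans
        ((Equiv.ofBijective
            (fun x : {y // y ∈ startSet σ} =>
              (⟨midPerm σ x.1, Finset.mem_image_of_mem _ x.2⟩ :
                {y // y ∈ (startSet σ).image (fun s => midPerm σ s)}))
            ⟨fun x y hxy => Subtype.ext ((midPerm σ).injective (congrArg Subtype.val hxy)),
             fun y => by
               obtain ⟨x, hx, hxy⟩ := Finset.mem_image.mp y.2
               exact ⟨⟨x, hx⟩, Subtype.ext hxy⟩⟩).trans
          (((startSet σ).image (fun s => midPerm σ s)).orderIsoOfFin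
            (Finset.card_image_of_injective _ (midPerm σ).injective)).toEquiv.symm)⟩

section AuxN

variable {m : ℕ} (σ : Equiv.Perm (Fin m))

lemma midPerm_val (s : Fin (midLen σ)) (h : aOf σ + (s : ℕ) < m) :
    (midPerm σ s : ℕ) = ((σ ⟨aOf σ + (s : ℕ), h⟩ : Fin m) : ℕ) - aOf σ := rfl

/-- `ω` as a function on `ℕ`. -/
noncomputable def wN (j : ℕ) : ℕ := if h : j < midLen σ then (midPerm σ ⟨j, h⟩ : ℕ) else j

/-- `j` is the start of a class. -/
def stN (j : ℕ) : Prop := j = 0 ∨ wN σ j ≠ wN σ (j - 1) + 1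

noncomputable instance : DecidablePred (stN σ) := fun _ => by unfold stN; infer_instance

/-- greatest class start `≤ j`. -/
noncomputable def pN (j : ℕ) : ℕ := Nat.findGreatest (stN σ) j

lemma wN_fin (s : Fin (midLen σ)) : wN σ (s : ℕ) = (midPerm σ s : ℕ) := by
  unfold wN
  rw [dif_pos s.isLt, Fin.eta]

lemma wN_eq (j : ℕ) (hj : j < midLen σ) (h2 : aOf σ + j < m) :
    wN σ j = ((σ ⟨aOf σ + j, h2⟩ : Fin m) : ℕ) - aOf σ := by
  unfold wN; rw [dif_pos hj]; rfl

lemma wN_mid (j : ℕ) (hj : j < midLen σ) (h2 : aOf σ + j < m) :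
    aOf σ ≤ ((σ ⟨aOf σ + j, h2⟩ : Fin m) : ℕ) ∧
      ((σ ⟨aOf σ + j, h2⟩ : Fin m) : ℕ) < m - cOf σ := by
  refine mid_mem σ _ ⟨by simp, by simp; unfold midLen at hj; omega⟩

lemma wN_lt {j : ℕ} (h : j < midLen σ) : wN σ j < midLen σ := by
  unfold wN; rw [dif_pos h]; exact (midPerm σ ⟨j, h⟩).isLt

lemma wN_inj {i j : ℕ} (hi : i < midLen σ) (hj : j < midLen σ) (h : wN σ i = wN σ j) :
    i = j := by
  unfold wN at h
  rw [dif_pos hi, dif_pos hj] at h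
  have := (midPerm σ).injective (Fin.ext h : midPerm σ ⟨i, hi⟩ = midPerm σ ⟨j, hj⟩)
  exact congrArg Fin.val this

lemma wN_surj {v : ℕ} (hv : v < midLen σ) : ∃ j, j < midLen σ ∧ wN σ j = v := by
  refine ⟨((midPerm σ).symm ⟨v, hv⟩ : Fin (midLen σ)), Fin.isLt _, ?_⟩
  rw [wN_fin σ ((midPerm σ).symm ⟨v, hv⟩)]
  rw [Equiv.apply_symm_apply]

lemma stN_zero : stN σ 0 := Or.inl rfl

lemma pN_le (j : ℕ) : pN σ j ≤ j := Nat.findGreatest_le j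

lemma pN_st (j : ℕ) : stN σ (pN σ j) :=
  Nat.findGreatest_spec (Nat.zero_le j) (stN_zero σ)

lemma pN_max {j s : ℕ} (h1 : pN σ j < s) (h2 : s ≤ j) : ¬ stN σ s :=
  Nat.findGreatest_is_greatest h1 h2

lemma pN_ge {j s : ℕ} (h1 : stN σ s) (h2 : s ≤ j) : s ≤ pN σ j :=
  Nat.le_findGreatest h2 h1

lemma pN_self {j : ℕ} (h : stN σ j) : pN σ j = j :=
  le_antisymm (pN_le σ j) (pN_ge σ h le_rfl)

lemma wN_chain : ∀ j, j < midLen σ → wN σ j = wN σ (pN σ j) + (j - pN σ j) := by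
  intro j
  induction j using Nat.strong_induction_on with
  | _ j ih =>
    intro hj
    by_cases hs : stN σ j
    · rw [pN_self σ hs]; omega
    · have hj0 : j ≠ 0 := fun h => hs (Or.inl h)
      have hw : wN σ j = wN σ (j - 1) + 1 := by
        unfold stN at hs; push_neg at hs; exact hs.2
      have hp : pN σ j = pN σ (j - 1) := by
        have h2 := Nat.findGreatest_succ (P := stN σ) (j - 1)
        rw [show j - 1 + 1 = j by omega, if_neg hs] at h2
        exact h2
      have h1 := ih (j - 1) (by omega) (by omega)
      have hple := pN_le σ (j - 1)
      rw [hw, h1, hp]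
      omega

lemma pN_between {i j : ℕ} (h1 : pN σ j ≤ i) (h2 : i ≤ j) : pN σ i = pN σ j := by
  apply le_antisymm
  · by_contra h
    push_neg at h
    exact pN_max σ h (le_trans (pN_le σ i) h2) (pN_st σ i)
  · exact pN_ge σ (pN_st σ j) h1

lemma wN_chain2 {i j : ℕ} (hj : j < midLen σ) (h1 : pN σ j ≤ i) (h2 : i ≤ j) :
    wN σ i = wN σ (pN σ j) + (i - pN σ j) := by
  have := wN_chain σ i (lt_of_le_of_lt h2 hj)
  rwa [pN_between σ h1 h2] at this

lemma lemD {j s' : ℕ} (hj : j < midLen σ) (hs' : s' < midLen σ) (hst : stN σ s')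
    (hlt : wN σ (pN σ j) < wN σ s') : wN σ j < wN σ s' := by
  by_contra hle
  push_neg at hle
  have hcj := wN_chain σ j hj
  have hple := pN_le σ j
  set k := wN σ s' - wN σ (pN σ j) with hk
  have hk1 : 0 < k := by omega
  have hk2 : pN σ j + k ≤ j := by omega
  have h3 : wN σ (pN σ j + k) = wN σ (pN σ j) + k := by
    have h := wN_chain2 σ hj (i := pN σ j + k) (by omega) hk2
    omega
  have heq : pN σ j + k = s' := wN_inj σ (by omega) hs' (by omega)
  exact pN_max σ (by omega : pN σ j < pN σ j + k) (by omega) (heq ▸ hst)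

lemma exists_start_zero (hL : 0 < midLen σ) :
    ∃ s, s < midLen σ ∧ stN σ s ∧ wN σ s = 0 := by
  obtain ⟨j, hj, hw⟩ := wN_surj σ hL
  have hc := wN_chain σ j hj
  have hple := pN_le σ j
  exact ⟨pN σ j, by omega, pN_st σ j, by omega⟩

lemma lemR2 {s : ℕ} (hs : s < midLen σ) (hst : stN σ s)
    (hmaxp : ∀ u, u < midLen σ → stN σ u → u ≤ s)
    (hmaxv : ∀ u, u < midLen σ → stN σ u → wN σ u ≤ wN σ s) :
    wN σ (midLen σ - 1) = midLen σ - 1 := by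
  have hL : 0 < midLen σ := by omega
  obtain ⟨j1, hj1, hw1⟩ := wN_surj σ (show midLen σ - 1 < midLen σ by omega)
  have hpj := pN_le σ j1
  have hpstart := pN_st σ j1
  have hpLt : pN σ j1 < midLen σ := by omega
  have hwsl := wN_lt σ hs
  have hcase : ¬ (wN σ (pN σ j1) < wN σ s) := by
    intro h
    have := lemD σ hj1 hs hst h
    omega
  have hval : wN σ (pN σ j1) = wN σ s :=
    le_antisymm (hmaxv _ hpLt hpstart) (by omega)
  have hps : pN σ j1 = s := wN_inj σ hpLt hs hval
  have hpL : pN σ (midLen σ - 1) = s := by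
    apply le_antisymm
    · exact hmaxp _ (by have := pN_le σ (midLen σ - 1); omega) (pN_st σ _)
    · exact pN_ge σ hst (by omega)
  have hc1 := wN_chain σ (midLen σ - 1) (by omega)
  have hc2 := wN_chain σ j1 hj1
  rw [hpL] at hc1
  rw [hps] at hc2
  have := wN_lt σ (show midLen σ - 1 < midLen σ by omega)
  omega

lemma lemR3 {s1 s2 : ℕ} (hs1L : s1 < midLen σ) (hs2L : s2 < midLen σ) (h12 : s1 < s2)
    (hst1 : stN σ s1) (hst2 : stN σ s2)
    (hadj : ∀ u, u < midLen σ → stN σ u → ¬(s1 < u ∧ u < s2))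
    (hlt : wN σ s1 < wN σ s2)
    (hbetween : ∀ u, u < midLen σ → stN σ u → ¬(wN σ s1 < wN σ u ∧ wN σ u < wN σ s2)) :
    False := by
  set d := s2 - s1 with hd
  have hp21 : pN σ (s2 - 1) = s1 := by
    have hple := pN_le σ (s2 - 1)
    apply le_antisymm
    · by_contra h
      push_neg at h
      exact hadj _ (by omega) (pN_st σ _) ⟨h, by omega⟩
    · exact pN_ge σ hst1 (by omega)
  have hc := wN_chain σ (s2 - 1) (by omega)
  rw [hp21] at hc
  have hne : wN σ s2 ≠ wN σ s1 + d := by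
    rcases hst2 with h0 | h
    · omega
    · omega
  have hgt : wN σ s1 + d < wN σ s2 := by
    by_contra h
    push_neg at h
    set k := wN σ s2 - wN σ s1 with hk
    have h3 := wN_chain2 σ (j := s2 - 1) (by omega) (i := s1 + k) (by rw [hp21]; omega)
      (by omega)
    rw [hp21] at h3
    have := wN_inj σ (show s1 + k < midLen σ by omega) hs2L (by omega)
    omega
  have hwl2 := wN_lt σ hs2L
  have hdL : wN σ s1 + d < midLen σ := by omega
  obtain ⟨j2, hj2, hw2⟩ := wN_surj σ hdL
  have hp2le := pN_le σ j2
  have hp2 : pN σ j2 < midLen σ := by omega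
  have hpst := pN_st σ j2
  have hc2 := wN_chain σ j2 hj2
  rcases lt_trichotomy (wN σ (pN σ j2)) (wN σ s1) with h | h | h
  · have := lemD σ hj2 hs1L hst1 h
    omega
  · have hpe : pN σ j2 = s1 := wN_inj σ hp2 hs1L h
    rw [hpe] at hc2
    rw [hpe] at hp2le
    have hj2e : j2 = s2 := by omega
    rw [hj2e] at hw2
    omega
  · exact hbetween _ hp2 hpst ⟨h, by omega⟩

end AuxN
section AuxSigma

variable {m : ℕ} (σ : Equiv.Perm (Fin m))

lemma sigma_a_ne (hσ : σ ≠ 1) :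
    ∃ h : aOf σ < m, ((σ ⟨aOf σ, h⟩ : Fin m) : ℕ) ≠ aOf σ := by
  have hle : aOf σ ≤ m := Nat.findGreatest_le m
  have ham : aOf σ < m := by
    rcases lt_or_eq_of_le hle with h | h
    · exact h
    · refine absurd (Equiv.ext fun j => fix_low σ j ?_) hσ
      have := j.isLt; omega
  have hnot := Nat.findGreatest_is_greatest
    (P := fun a => ∀ j : Fin m, (j : ℕ) < a → σ j = j) (n := m) (k := aOf σ + 1)
    (show aOf σ < aOf σ + 1 by omega) (by omega)
  push_neg at hnot
  obtain ⟨j, hj, hne⟩ := hnot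
  have hjv : (j : ℕ) = aOf σ := by
    rcases Nat.lt_or_ge (j : ℕ) (aOf σ) with h | h
    · exact absurd (fix_low σ j h) hne
    · omega
  refine ⟨ham, fun h => hne ?_⟩
  have hj' : j = ⟨aOf σ, ham⟩ := Fin.ext hjv
  rw [hj']
  exact Fin.ext h

lemma aOf_add_cOf_lt (hσ : σ ≠ 1) : aOf σ + cOf σ < m := by
  obtain ⟨ham, hne⟩ := sigma_a_ne σ hσ
  have hc : cOf σ ≤ m := Nat.findGreatest_le m
  by_contra h
  push_neg at h
  refine hne (congrArg Fin.val (fix_high σ _ ?_))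
  show m - cOf σ ≤ aOf σ
  omega

lemma midLen_pos (hσ : σ ≠ 1) : 0 < midLen σ := by
  have := aOf_add_cOf_lt σ hσ
  unfold midLen
  omega

lemma w0_ne (hσ : σ ≠ 1) : wN σ 0 ≠ 0 := by
  obtain ⟨ham, hne⟩ := sigma_a_ne σ hσ
  have hL := midLen_pos σ hσ
  have h2 : aOf σ + 0 < m := by omega
  rw [wN_eq σ 0 hL h2]
  have hmm := wN_mid σ 0 hL h2
  have hx : ((σ ⟨aOf σ + 0, h2⟩ : Fin m) : ℕ) ≠ aOf σ := by
    have he : (⟨aOf σ + 0, h2⟩ : Fin m) = ⟨aOf σ, ham⟩ := Fin.ext rfl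
    rw [he]; exact hne
  omega

lemma sigma_c_ne (hσ : σ ≠ 1) :
    ∃ h : m - cOf σ - 1 < m, ((σ ⟨m - cOf σ - 1, h⟩ : Fin m) : ℕ) ≠ m - cOf σ - 1 := by
  have hac := aOf_add_cOf_lt σ hσ
  have hnot := Nat.findGreatest_is_greatest
    (P := fun c => ∀ j : Fin m, m - c ≤ (j : ℕ) → σ j = j) (n := m) (k := cOf σ + 1)
    (show cOf σ < cOf σ + 1 by omega) (by omega)
  push_neg at hnot
  obtain ⟨j, hj, hne⟩ := hnot
  have hjv : (j : ℕ) = m - cOf σ - 1 := by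
    have hlt : (j : ℕ) < m - cOf σ := by
      by_contra hh
      push_neg at hh
      exact hne (fix_high σ j hh)
    omega
  refine ⟨by omega, fun h => hne ?_⟩
  have hj' : j = ⟨m - cOf σ - 1, by omega⟩ := Fin.ext hjv
  rw [hj']
  exact Fin.ext h

lemma wlast_ne (hσ : σ ≠ 1) : wN σ (midLen σ - 1) ≠ midLen σ - 1 := by
  obtain ⟨hcm, hne⟩ := sigma_c_ne σ hσ
  have hac := aOf_add_cOf_lt σ hσ
  have hL := midLen_pos σ hσ
  have hLm : midLen σ = m - aOf σ - cOf σ := rfl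
  have hj : midLen σ - 1 < midLen σ := by omega
  have h2 : aOf σ + (midLen σ - 1) < m := by omega
  rw [wN_eq σ _ hj h2]
  have hmm := wN_mid σ _ hj h2
  have he : (⟨aOf σ + (midLen σ - 1), h2⟩ : Fin m) = ⟨m - cOf σ - 1, hcm⟩ :=
    Fin.ext (show aOf σ + (midLen σ - 1) = m - cOf σ - 1 by omega)
  rw [he] at hmm ⊢
  omega

end AuxSigma

section GradeZero

/-- Criterion for a permutation to have grade zero. -/
lemma grade_eq_zero {n : ℕ} (hn : 0 < n) (E : Equiv.Perm (Fin n))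
    (h0 : ((E ⟨0, hn⟩ : Fin n) : ℕ) ≠ 0)
    (hl : ((E ⟨n - 1, by omega⟩ : Fin n) : ℕ) ≠ n - 1)
    (hb : ∀ i : ℕ, ∀ h1 : i + 1 < n,
      ((E ⟨i + 1, h1⟩ : Fin n) : ℕ) ≠ ((E ⟨i, by omega⟩ : Fin n) : ℕ) + 1) :
    grade E = 0 := by
  have hE1 : E ≠ 1 := by
    intro h
    rw [h] at h0
    exact h0 rfl
  rw [grade, if_neg hE1]
  have ha : aOf E = 0 := by
    by_contra h
    have hp : ∀ j : Fin n, (j : ℕ) < aOf E → E j = j := fix_low E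
    exact h0 (by rw [hp ⟨0, hn⟩ (show (0:ℕ) < aOf E by omega)])
  have hc : cOf E = 0 := by
    by_contra h
    have hp : ∀ j : Fin n, n - cOf E ≤ (j : ℕ) → E j = j := fix_high E
    exact hl (by rw [hp ⟨n - 1, by omega⟩ (show n - cOf E ≤ n - 1 by omega)])
  have hLn : midLen E = n := by unfold midLen; omega
  have hbz : bOf E = 0 := by
    rw [bOf, Finset.card_eq_zero, Finset.filter_eq_empty_iff]
    rintro s -
    rintro ⟨h1, heq⟩
    have hs1 : (s : ℕ) + 1 < n := by omega
    have hv1 : (midPerm E ⟨(s : ℕ) + 1, h1⟩ : ℕ)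
        = ((E ⟨(s : ℕ) + 1, hs1⟩ : Fin n) : ℕ) := by
      rw [midPerm_val E _ (show aOf E + ((s : ℕ) + 1) < n by omega)]
      have he : (⟨aOf E + ((s : ℕ) + 1), show aOf E + ((s : ℕ) + 1) < n by omega⟩ : Fin n)
          = ⟨(s : ℕ) + 1, hs1⟩ := Fin.ext (show aOf E + ((s : ℕ) + 1) = (s : ℕ) + 1 by omega)
      rw [he, ha]
      omega
    have hs0 : (s : ℕ) < n := by have := s.isLt; omega
    have hv2 : (midPerm E s : ℕ) = ((E ⟨(s : ℕ), hs0⟩ : Fin n) : ℕ) := by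
      rw [midPerm_val E _ (show aOf E + (s : ℕ) < n by omega)]
      have he : (⟨aOf E + (s : ℕ), show aOf E + (s : ℕ) < n by omega⟩ : Fin n)
          = ⟨(s : ℕ), hs0⟩ := Fin.ext (show aOf E + (s : ℕ) = (s : ℕ) by omega)
      rw [he, ha]
      omega
    rw [hv1, hv2] at heq
    exact hb (s : ℕ) hs1 heq
  omega

end GradeZero
section Glue

variable {m : ℕ} (σ : Equiv.Perm (Fin m))

lemma wN_pos {j : ℕ} (hj : j < midLen σ) : wN σ j = (midPerm σ ⟨j, hj⟩ : ℕ) := by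
  unfold wN; rw [dif_pos hj]

lemma mem_startSet_iff (s : Fin (midLen σ)) : s ∈ startSet σ ↔ stN σ (s : ℕ) := by
  have hs1 : (s : ℕ) - 1 < midLen σ := by have := s.isLt; omega
  have e1 : wN σ (s : ℕ) = (midPerm σ s : ℕ) := wN_fin σ s
  have e2 : wN σ ((s : ℕ) - 1) = (midPerm σ ⟨(s : ℕ) - 1, hs1⟩ : ℕ) := wN_pos σ hs1
  unfold startSet stN
  simp only [Finset.mem_filter, Finset.mem_univ, true_and]
  rw [e1, e2]
  constructor
  · rintro (h0 | h)
    · exact Or.inl h0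
    · by_cases h0 : (s : ℕ) = 0
      · exact Or.inl h0
      · exact Or.inr (h (by omega))
  · rintro (h0 | h)
    · exact Or.inl h0
    · exact Or.inr (fun _ => h)

lemma part1 (hσ : σ ≠ 1) {n : ℕ}
    (hn : (startSet σ).card = n)
    (hV : ((startSet σ).image fun s => midPerm σ s).card = n)
    (E : Equiv.Perm (Fin n))
    (hEt : ∀ t : Fin n,
      (((startSet σ).image fun s => midPerm σ s).orderIsoOfFin hV) (E t)
        = ⟨midPerm σ (((startSet σ).orderIsoOfFin hn) t),
           Finset.mem_image_of_mem _ (Finset.coe_mem _)⟩) :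
    grade E = 0 := by
  have hL := midLen_pos σ hσ
  set sE := (startSet σ).orderEmbOfFin hn with hsEdef
  set vE := ((startSet σ).image fun s => midPerm σ s).orderEmbOfFin hV with hvEdef
  have hF : ∀ t : Fin n, vE (E t) = midPerm σ (sE t) := by
    intro t
    have h := congrArg Subtype.val (hEt t)
    simp only [Finset.coe_orderIsoOfFin_apply] at h
    exact h
  have hsmem : ∀ t, sE t ∈ startSet σ := fun t => Finset.orderEmbOfFin_mem _ hn t
  have hsst : ∀ t, stN σ ((sE t : Fin (midLen σ)) : ℕ) :=
    fun t => (mem_startSet_iff σ _).mp (hsmem t)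
  have hSsurj : ∀ x : Fin (midLen σ), x ∈ startSet σ → ∃ t, sE t = x := by
    intro x hx
    have hr : x ∈ Set.range ⇑sE := by
      rw [hsEdef, Finset.range_orderEmbOfFin]
      exact hx
    exact hr
  have hVsurj : ∀ x : Fin (midLen σ),
      x ∈ (startSet σ).image (fun s => midPerm σ s) → ∃ r, vE r = x := by
    intro x hx
    have hr : x ∈ Set.range ⇑vE := by
      rw [hvEdef, Finset.range_orderEmbOfFin]
      exact hx
    exact hr
  have hsm : StrictMono ⇑sE := sE.strictMono
  have hvm : StrictMono ⇑vE := vE.strictMono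
  have h0S : (⟨0, hL⟩ : Fin (midLen σ)) ∈ startSet σ := (mem_startSet_iff σ _).mpr (Or.inl rfl)
  have hn0 : 0 < n := by
    rw [← hn]
    exact Finset.card_pos.mpr ⟨_, h0S⟩
  -- value of wN at sE t
  have hwv : ∀ t : Fin n, wN σ ((sE t : Fin (midLen σ)) : ℕ) = (vE (E t) : ℕ) := by
    intro t
    rw [hF t]
    exact wN_fin σ (sE t)
  -- fact A : E ⟨0⟩ ≠ 0
  have factA : ((E ⟨0, hn0⟩ : Fin n) : ℕ) ≠ 0 := by
    intro hcon
    have hE0 : E ⟨0, hn0⟩ = ⟨0, hn0⟩ := Fin.ext hcon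
    obtain ⟨sbar, hsbarL, hsbarSt, hsbarW⟩ := exists_start_zero σ hL
    have hsbarMem : (⟨sbar, hsbarL⟩ : Fin (midLen σ)) ∈ startSet σ :=
      (mem_startSet_iff σ _).mpr hsbarSt
    obtain ⟨r, hr⟩ := hVsurj _ (Finset.mem_image_of_mem _ hsbarMem)
    have hle : vE ⟨0, hn0⟩ ≤ vE r := hvm.monotone (by
      rw [Fin.le_def]; exact Nat.zero_le _)
    have hrv : (vE r : ℕ) = 0 := by
      rw [hr]
      rw [← wN_fin σ (⟨sbar, hsbarL⟩ : Fin (midLen σ))]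
      exact hsbarW
    have hminv : (vE (E ⟨0, hn0⟩) : ℕ) = 0 := by
      rw [hE0]
      rw [Fin.le_def] at hle
      omega
    -- sE ⟨0⟩ = ⟨0, hL⟩
    obtain ⟨t'', ht''⟩ := hSsurj _ h0S
    have hle2 : sE ⟨0, hn0⟩ ≤ sE t'' := hsm.monotone (by
      rw [Fin.le_def]; exact Nat.zero_le _)
    rw [ht''] at hle2
    rw [Fin.le_def] at hle2
    have hs0 : ((sE ⟨0, hn0⟩ : Fin (midLen σ)) : ℕ) = 0 := by
      simpa using hle2
    have := hwv ⟨0, hn0⟩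
    rw [hs0, hminv] at this
    exact w0_ne σ hσ this
  -- fact B : E ⟨n-1⟩ ≠ n-1
  have factB : ((E ⟨n - 1, by omega⟩ : Fin n) : ℕ) ≠ n - 1 := by
    intro hcon
    have hEl : E ⟨n - 1, by omega⟩ = ⟨n - 1, by omega⟩ := Fin.ext hcon
    set t1 : Fin n := ⟨n - 1, by omega⟩ with ht1
    have hmaxp : ∀ u, u < midLen σ → stN σ u → u ≤ ((sE t1 : Fin (midLen σ)) : ℕ) := by
      intro u hu hst
      obtain ⟨t'', ht''⟩ := hSsurj ⟨u, hu⟩ ((mem_startSet_iff σ _).mpr hst)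
      have : sE t'' ≤ sE t1 := hsm.monotone (by
        rw [Fin.le_def]; have := t''.isLt; simp [ht1]; omega)
      rw [ht''] at this
      rw [Fin.le_def] at this
      exact this
    have hmaxv : ∀ u, u < midLen σ → stN σ u →
        wN σ u ≤ wN σ ((sE t1 : Fin (midLen σ)) : ℕ) := by
      intro u hu hst
      obtain ⟨r, hr⟩ := hVsurj (midPerm σ ⟨u, hu⟩)
        (Finset.mem_image_of_mem _ ((mem_startSet_iff σ _).mpr hst))
      have h1 : vE r ≤ vE (E t1) := hvm.monotone (by
        rw [hEl, Fin.le_def]; have := (r).isLt; simp; omega)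
      rw [hr] at h1
      rw [Fin.le_def] at h1
      rw [hwv t1]
      have hwu : wN σ u = (midPerm σ ⟨u, hu⟩ : ℕ) := wN_pos σ hu
      omega
    have := lemR2 σ (Fin.isLt _) (hsst t1) hmaxp hmaxv
    exact wlast_ne σ hσ this
  -- fact C : no doubled strings
  have factC : ∀ i : ℕ, ∀ h1 : i + 1 < n,
      ((E ⟨i + 1, h1⟩ : Fin n) : ℕ) ≠ ((E ⟨i, by omega⟩ : Fin n) : ℕ) + 1 := by
    intro i h1 heq
    set t1 : Fin n := ⟨i, by omega⟩ with ht1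
    set t2 : Fin n := ⟨i + 1, h1⟩ with ht2
    have ht12 : t1 < t2 := by rw [ht1, ht2, Fin.mk_lt_mk]; omega
    have hs12 : ((sE t1 : Fin (midLen σ)) : ℕ) < ((sE t2 : Fin (midLen σ)) : ℕ) := by
      have := hsm ht12
      rwa [Fin.lt_def] at this
    have hE12 : E t1 < E t2 := by rw [Fin.lt_def]; omega
    refine lemR3 σ (Fin.isLt (sE t1)) (Fin.isLt (sE t2)) hs12 (hsst t1) (hsst t2) ?_ ?_ ?_
    · -- no start strictly between
      intro u hu hst ⟨hu1, hu2⟩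
      obtain ⟨t'', ht''⟩ := hSsurj ⟨u, hu⟩ ((mem_startSet_iff σ _).mpr hst)
      have hl1 : sE t1 < sE t'' := by rw [ht'', Fin.lt_def]; exact hu1
      have hl2 : sE t'' < sE t2 := by rw [ht'', Fin.lt_def]; exact hu2
      have hg1 := hsm.lt_iff_lt.mp hl1
      have hg2 := hsm.lt_iff_lt.mp hl2
      rw [Fin.lt_def] at hg1 hg2
      simp [ht1, ht2] at hg1 hg2
      omega
    · -- values increase
      rw [hwv t1, hwv t2]
      have := hvm hE12
      rwa [Fin.lt_def] at this
    · -- no start value strictly between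
      intro u hu hst ⟨hu1, hu2⟩
      obtain ⟨r, hr⟩ := hVsurj (midPerm σ ⟨u, hu⟩)
        (Finset.mem_image_of_mem _ ((mem_startSet_iff σ _).mpr hst))
      rw [hwv t1] at hu1
      rw [hwv t2] at hu2
      have hwu : wN σ u = (midPerm σ ⟨u, hu⟩ : ℕ) := wN_pos σ hu
      have hl1 : vE (E t1) < vE r := by rw [hr, Fin.lt_def]; omega
      have hl2 : vE r < vE (E t2) := by rw [hr, Fin.lt_def]; omega
      have hg1 := hvm.lt_iff_lt.mp hl1
      have hg2 := hvm.lt_iff_lt.mp hl2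
      rw [Fin.lt_def] at hg1 hg2
      omega
  exact grade_eq_zero hn0 E factA factB factC

end Glue
section Part2

lemma sigma_perm_ext {n n' : ℕ} (e : Equiv.Perm (Fin n)) (e' : Equiv.Perm (Fin n'))
    (h : n = n')
    (hv : ∀ i : ℕ, ∀ hi : i < n, ∀ hi' : i < n',
      ((e ⟨i, hi⟩ : Fin n) : ℕ) = ((e' ⟨i, hi'⟩ : Fin n') : ℕ)) :
    (⟨n, e⟩ : Σ k, Equiv.Perm (Fin k)) = ⟨n', e'⟩ := by
  subst h
  congr 1
  refine Equiv.ext fun j => Fin.ext ?_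
  have hh := hv j j.isLt j.isLt
  simpa [Fin.eta] using hh

variable {m : ℕ} (σ : Equiv.Perm (Fin m))

lemma part2 (_hσ : σ ≠ 1) (ha : aOf σ = 0) (hb0 : bOf σ = 0) (hc : cOf σ = 0) {n : ℕ}
    (hn : (startSet σ).card = n)
    (hV : ((startSet σ).image fun s => midPerm σ s).card = n)
    (E : Equiv.Perm (Fin n))
    (hEt : ∀ t : Fin n,
      (((startSet σ).image fun s => midPerm σ s).orderIsoOfFin hV) (E t)
        = ⟨midPerm σ (((startSet σ).orderIsoOfFin hn) t),
           Finset.mem_image_of_mem _ (Finset.coe_mem _)⟩) :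
    (⟨n, E⟩ : Σ k, Equiv.Perm (Fin k)) = ⟨m, σ⟩ := by
  have hLm : midLen σ = m := by unfold midLen; omega
  -- no doubled strings, in `wN` terms
  have hnd : ∀ j, j + 1 < midLen σ → wN σ (j + 1) ≠ wN σ j + 1 := by
    intro j hj1 hcon
    have hfe := hb0
    rw [bOf, Finset.card_eq_zero, Finset.filter_eq_empty_iff] at hfe
    have hjL : j < midLen σ := by omega
    have hx := hfe (Finset.mem_univ (⟨j, hjL⟩ : Fin (midLen σ)))
    refine hx ⟨hj1, ?_⟩
    have e1 : wN σ (j + 1) = (midPerm σ ⟨j + 1, hj1⟩ : ℕ) := wN_pos σ hj1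
    have e2 : wN σ j = (midPerm σ ⟨j, hjL⟩ : ℕ) := wN_pos σ hjL
    exact (show (midPerm σ ⟨j + 1, hj1⟩ : ℕ) = (midPerm σ ⟨j, hjL⟩ : ℕ) + 1 by
      rw [← e1, ← e2]; exact hcon)
  have hallst : ∀ j, j < midLen σ → stN σ j := by
    intro j hj
    by_cases h0 : j = 0
    · exact Or.inl h0
    · refine Or.inr fun hcon => hnd (j - 1) (by omega) ?_
      rw [show j - 1 + 1 = j by omega]
      exact hcon
  have hSuniv : startSet σ = Finset.univ := by
    apply Finset.eq_univ_iff_forall.mpr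
    intro s
    exact (mem_startSet_iff σ s).mpr (hallst _ s.isLt)
  have hVuniv : (startSet σ).image (fun s => midPerm σ s) = Finset.univ := by
    apply Finset.eq_univ_iff_forall.mpr
    intro x
    exact Finset.mem_image.mpr ⟨(midPerm σ).symm x, by rw [hSuniv]; exact Finset.mem_univ _,
      Equiv.apply_symm_apply _ _⟩
  have hnm : n = m := by
    rw [← hn, hSuniv, Finset.card_univ, Fintype.card_fin, hLm]
  have hnL : n = midLen σ := by omega
  set sE := (startSet σ).orderEmbOfFin hn with hsEdef
  set vE := ((startSet σ).image fun s => midPerm σ s).orderEmbOfFin hV with hvEdef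
  have hF : ∀ t : Fin n, vE (E t) = midPerm σ (sE t) := by
    intro t
    have h := congrArg Subtype.val (hEt t)
    simp only [Finset.coe_orderIsoOfFin_apply] at h
    exact h
  -- explicit description of sE and vE
  have hsfe : (fun t : Fin n => (⟨(t : ℕ), by rw [← hnL]; exact t.isLt⟩ : Fin (midLen σ)))
      = ⇑sE := by
    refine Finset.orderEmbOfFin_unique hn (fun x => by rw [hSuniv]; exact Finset.mem_univ _) ?_
    intro a b hab
    rw [Fin.mk_lt_mk]
    exact hab
  have hvfe : (fun t : Fin n => (⟨(t : ℕ), by rw [← hnL]; exact t.isLt⟩ : Fin (midLen σ)))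
      = ⇑vE := by
    refine Finset.orderEmbOfFin_unique hV (fun x => by rw [hVuniv]; exact Finset.mem_univ _) ?_
    intro a b hab
    rw [Fin.mk_lt_mk]
    exact hab
  have hsval : ∀ t : Fin n, ((sE t : Fin (midLen σ)) : ℕ) = (t : ℕ) := by
    intro t
    have := congrFun hsfe t
    exact (congrArg Fin.val this).symm
  have hvval : ∀ t : Fin n, ((vE t : Fin (midLen σ)) : ℕ) = (t : ℕ) := by
    intro t
    have := congrFun hvfe t
    exact (congrArg Fin.val this).symm
  refine sigma_perm_ext E σ hnm ?_
  intro i hi hi'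
  have hiL : i < midLen σ := by omega
  -- value of E at i
  have h1 : ((E ⟨i, hi⟩ : Fin n) : ℕ) = (midPerm σ (sE ⟨i, hi⟩) : ℕ) := by
    rw [← hF ⟨i, hi⟩]
    exact (hvval _).symm
  have h2 : sE ⟨i, hi⟩ = ⟨i, hiL⟩ := Fin.ext (hsval _)
  rw [h2] at h1
  have h3 : (midPerm σ (⟨i, hiL⟩ : Fin (midLen σ)) : ℕ) = wN σ i := (wN_pos σ hiL).symm
  have h4 : aOf σ + i < m := by omega
  have h5 := wN_eq σ i hiL h4
  have h6 : (⟨aOf σ + i, h4⟩ : Fin m) = ⟨i, hi'⟩ :=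
    Fin.ext (show aOf σ + i = i by omega)
  rw [h6] at h5
  have h7 := wN_mid σ i hiL h4
  rw [h6] at h7
  rw [h1, h3, h5]
  omega

end Part2
/-- For every `m ≥ 1` and `σ ∈ Σ_m`, the skeleton `κ(σ)` is primitive, i.e.
`g(κ(σ)) = 0`; moreover, if `σ` itself is primitive then `κ(σ) = σ`
(as elements of `Σ n, Σ_n`, since `κ(σ) ∈ Σ_{m−g(σ)} = Σ_m` in that case). -/
theorem skel_primitive_and_skel_of_primitive (m : ℕ) (hm : 1 ≤ m) (σ : Equiv.Perm (Fin m)) :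
    grade (skel σ).2 = 0 ∧ (grade σ = 0 → skel σ = ⟨m, σ⟩) := by
  by_cases hσ : σ = 1
  · subst hσ
    have h1 : skel (1 : Equiv.Perm (Fin m)) = ⟨1, 1⟩ := by
      rw [skel, if_pos rfl]
    constructor
    · rw [h1]
      show grade (1 : Equiv.Perm (Fin 1)) = 0
      rw [grade, if_pos rfl]
    · intro hg
      rw [grade, if_pos rfl] at hg
      have hm1 : m = 1 := by omega
      subst hm1
      exact h1
  · constructor
    · unfold skel
      rw [if_neg hσ]
      exact part1 σ hσ rfl (Finset.card_image_of_injective _ (midPerm σ).injective) _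
        (fun t => ((((startSet σ).image fun s => midPerm σ s).orderIsoOfFin
          (Finset.card_image_of_injective _ (midPerm σ).injective)).toEquiv.apply_symm_apply _))
    · intro hg
      rw [grade, if_neg hσ] at hg
      have ha : aOf σ = 0 := by omega
      have hb0 : bOf σ = 0 := by omega
      have hc : cOf σ = 0 := by omega
      unfold skel
      rw [if_neg hσ]
      exact part2 σ hσ ha hb0 hc rfl
        (Finset.card_image_of_injective _ (midPerm σ).injective) _
        (fun t => ((((startSet σ).image fun s => midPerm σ s).orderIsoOfFin
          (Finset.card_image_of_injective _ (midPerm σ).injective)).toEquiv.apply_symm_apply _))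

end MarklOps
end
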